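/- Let N ≥ 1, let Γ_i be a strategy set for each i ∈ Fin N, let F be a feasibility predicate on Π_i Γ_i, let A_i : Γ_i → ℝ, let B_{ij} : Γ_i × Γ_j → ℝ for i ≠ j satisfy B_{ij}(a,b) = B_{ji}(b,a), and let c_i > 0 be real numbers. Define J^i(γ) = A_i(γ_i) + Σ_{j≠i} c_j·B_{ij}(γ_i,γ_j) and P(γ) = Σ_i c_i·A_i(γ_i) + Σ_{i<j} c_i·c_j·B_{ij}(γ_i,γ_j). Then every feasible γ* satisfying P(γ*) ≤ P(γ) for all feasible γ is a generalized Nash equilibrium: for every player i and every γ'_i such that the unilateral deviation of γ* by γ'_i is feasible, J^i(γ*) ≤ J^i of that deviation. -/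

import Mathlib

/-!
Changing only player `i`'s strategy changes `P` by exactly `c i` times the change of `Jⁱ`:
the own costs of the other players are untouched, and, by the symmetry of `B`, every
interaction term of `P` that involves `i` is `c i * c j * B i j`, i.e. `c i` times the
corresponding term of `Jⁱ`. So `P` is a weighted potential of the game, and as `c i > 0`, a
feasible unilateral deviation lowering `Jⁱ` would push `P` below its feasible minimum.
-/

open Finset Function

section WeightedPotential

variable {ι : Type*} [DecidableEq ι] {Γ : ι → Type*}

def IsWeightedPotential (c : ι → ℝ) (J : ι → (∀ i, Γ i) → ℝ) (P : (∀ i, Γ i) → ℝ) : Prop :=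
  ∀ γ i x, P (update γ i x) - P γ = c i * (J i (update γ i x) - J i γ)

theorem IsWeightedPotential.le_of_isMinOn {c : ι → ℝ} {J : ι → (∀ i, Γ i) → ℝ}
    {P : (∀ i, Γ i) → ℝ} (hP : IsWeightedPotential c J P) (hc : ∀ i, 0 < c i)
    {S : Set (∀ i, Γ i)} {γ : ∀ i, Γ i} (hmin : IsMinOn P S γ) {i : ι} {x : Γ i}
    (hx : update γ i x ∈ S) : J i γ ≤ J i (update γ i x) := by
  have hgain : 0 ≤ c i * (J i (update γ i x) - J i γ) := by
    rw [← hP]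
    exact sub_nonneg.2 (isMinOn_iff.1 hmin _ hx)
  exact sub_nonneg.1 (nonneg_of_mul_nonneg_right hgain (hc i))

end WeightedPotential

section

variable {ι : Type*} [Fintype ι] {Γ : ι → Type*} {M : Type*} [AddCommGroup M]

theorem sum_apply_update_sub_sum [DecidableEq ι] (f : ∀ j, Γ j → M) (γ : ∀ j, Γ j) (i : ι)
    (x : Γ i) : ∑ j, f j (update γ i x j) - ∑ j, f j (γ j) = f i x - f i (γ i) := by
  rw [← sum_sub_distrib, sum_eq_single i (fun j _ hj => by simp [update_of_ne hj]) (by simp),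
    update_self]

theorem sum_pairs_update_sub_sum [LinearOrder ι] (g : ∀ j k, Γ j → Γ k → M)
    (hg : ∀ j k, j ≠ k → ∀ a b, g j k a b = g k j b a) (γ : ∀ j, Γ j) (i : ι) (x : Γ i) :
    ∑ j, ∑ k ∈ univ.filter (j < ·), g j k (update γ i x j) (update γ i x k)
        - ∑ j, ∑ k ∈ univ.filter (j < ·), g j k (γ j) (γ k)
      = ∑ k ∈ univ.erase i, (g i k x (γ k) - g i k (γ i) (γ k)) := by
  set δ : ι → M := fun k => g i k x (γ k) - g i k (γ i) (γ k)
  -- Only pairs containing `i` change; a pair `(j, i)` is turned into `(i, j)` by `hg`.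
  have hpair : ∀ j k, j < k → g j k (update γ i x j) (update γ i x k) - g j k (γ j) (γ k)
      = (if j = i then δ k else 0) + (if k = i then δ j else 0) := by
    intro j k hjk
    by_cases hj : j = i
    · subst hj
      simp [δ, hjk.ne']
    by_cases hk : k = i
    · subst hk
      simp [δ, hj, hg k j (Ne.symm hj)]
    · simp [hj, hk]
  calc _ = ∑ j, ∑ k ∈ univ.filter (j < ·),
        ((if j = i then δ k else 0) + (if k = i then δ j else 0)) := by
        rw [← sum_sub_distrib]
        refine sum_congr rfl fun j _ => ?_
        rw [← sum_sub_distrib]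
        exact sum_congr rfl fun k hk => hpair j k (mem_filter.1 hk).2
    _ = ∑ k ∈ univ.filter (i < ·), δ k + ∑ j ∈ univ.filter (· < i), δ j := by
        simp [sum_add_distrib, sum_ite_eq', sum_filter]
    _ = _ := by
        have hsplit : univ.erase i = univ.filter (i < ·) ∪ univ.filter (· < i) := by
          ext k
          simp [ne_comm, lt_or_lt_iff_ne]
        rw [hsplit, sum_union (disjoint_filter.2 fun k _ h h' => lt_asymm h h')]

variable [LinearOrder ι] (A : ∀ i, Γ i → ℝ) (B : ∀ i j, Γ i × Γ j → ℝ) (c : ι → ℝ)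

def interactionCost (i : ι) (γ : ∀ j, Γ j) : ℝ :=
  A i (γ i) + ∑ j ∈ univ.erase i, c j * B i j (γ i, γ j)

def interactionPotential (γ : ∀ j, Γ j) : ℝ :=
  ∑ i, c i * A i (γ i) + ∑ i, ∑ j ∈ univ.filter (i < ·), c i * c j * B i j (γ i, γ j)

theorem interactionCost_update_sub (γ : ∀ j, Γ j) (i : ι) (x : Γ i) :
    interactionCost A B c i (update γ i x) - interactionCost A B c i γ
      = A i x - A i (γ i) + ∑ j ∈ univ.erase i, c j * (B i j (x, γ j) - B i j (γ i, γ j)) := by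
  have hothers : ∑ j ∈ univ.erase i, c j * B i j (x, update γ i x j)
      = ∑ j ∈ univ.erase i, c j * B i j (x, γ j) :=
    sum_congr rfl fun j hj => by rw [update_of_ne (ne_of_mem_erase hj)]
  simp only [interactionCost, update_self, hothers, mul_sub, sum_sub_distrib]
  ring

theorem isWeightedPotential_interactionPotential
    (hB : ∀ i j, i ≠ j → ∀ a b, B i j (a, b) = B j i (b, a)) :
    IsWeightedPotential c (interactionCost A B c) (interactionPotential A B c) := by
  intro γ i x
  have hpairs := sum_pairs_update_sub_sum (fun j k a b => c j * c k * B j k (a, b))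
    (fun j k hjk a b => by rw [hB j k hjk, mul_comm (c j)]) γ i x
  have hown := sum_apply_update_sub_sum (fun j a => c j * A j a) γ i x
  rw [interactionPotential, interactionPotential, add_sub_add_comm, hown, hpairs,
    interactionCost_update_sub, mul_add, mul_sub, mul_sum]
  congr 1
  exact sum_congr rfl fun j _ => by ring

end

theorem multiagent_other_coefficient_potential_minimizer_is_GNE_general
    {N : ℕ}
    (Γ : Fin N → Type*)
    (F : (∀ i, Γ i) → Prop)
    (A : ∀ i : Fin N, Γ i → ℝ)
    (B : ∀ i j : Fin N, Γ i × Γ j → ℝ)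
    (hsym : ∀ (i j : Fin N), i ≠ j → ∀ (a : Γ i) (b : Γ j), B i j (a, b) = B j i (b, a))
    (c : Fin N → ℝ) (hc : ∀ i, 0 < c i)
    (J : Fin N → (∀ i, Γ i) → ℝ)
    (hJ : ∀ (i : Fin N) (γ : ∀ j, Γ j),
      J i γ = A i (γ i) + ∑ j ∈ Finset.univ.erase i, c j * B i j (γ i, γ j))
    (P : (∀ i, Γ i) → ℝ)
    (hP : ∀ γ : ∀ i, Γ i,
      P γ = ∑ i : Fin N, c i * A i (γ i)
        + ∑ i : Fin N, ∑ j ∈ Finset.univ.filter (fun j => i < j),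
            c i * c j * B i j (γ i, γ j)) :
    ∀ γstar : ∀ i, Γ i, F γstar → (∀ γ, F γ → P γstar ≤ P γ) →
      ∀ (i : Fin N) (γ'i : Γ i), F (Function.update γstar i γ'i) →
        J i γstar ≤ J i (Function.update γstar i γ'i) := by
  obtain rfl : J = interactionCost A B c := funext₂ hJ
  obtain rfl : P = interactionPotential A B c := funext hP
  intro γstar _ hmin i γ'i hfeas
  exact (isWeightedPotential_interactionPotential A B c hsym).le_of_isMinOn hc
    (S := {γ | F γ}) (isMinOn_iff.2 hmin) hfeas

/-- Lemma 5 + Theorem 1 of the paper, constant coefficients: when each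
agent `i`'s cost is `Jⁱ(γ) = A i (γ i) + ∑_{j≠i} c j · B i j (γ i, γ j)` with symmetric
pairwise costs, a feasible minimizer of the potential
`P(γ) = ∑ i c i·A i (γ i) + ∑_{i<j} c i·c j·B i j (γ i, γ j)` is a generalized Nash
equilibrium. -/
theorem multiagent_other_coefficient_potential_minimizer_is_GNE
    {N : ℕ} (hN : 1 ≤ N)
    (Γ : Fin N → Type*)
    (F : (∀ i, Γ i) → Prop)
    (A : ∀ i : Fin N, Γ i → ℝ)
    (B : ∀ i j : Fin N, Γ i × Γ j → ℝ)
    (hsym : ∀ (i j : Fin N), i ≠ j → ∀ (a : Γ i) (b : Γ j), B i j (a, b) = B j i (b, a))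
    (c : Fin N → ℝ) (hc : ∀ i, 0 < c i)
    (J : Fin N → (∀ i, Γ i) → ℝ)
    (hJ : ∀ (i : Fin N) (γ : ∀ j, Γ j),
      J i γ = A i (γ i) + ∑ j ∈ Finset.univ.erase i, c j * B i j (γ i, γ j))
    (P : (∀ i, Γ i) → ℝ)
    (hP : ∀ γ : ∀ i, Γ i,
      P γ = ∑ i : Fin N, c i * A i (γ i)
        + ∑ i : Fin N, ∑ j ∈ Finset.univ.filter (fun j => i < j),
            c i * c j * B i j (γ i, γ j)) :
    ∀ γstar : ∀ i, Γ i, F γstar → (∀ γ, F γ → P γstar ≤ P γ) →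
      ∀ (i : Fin N) (γ'i : Γ i), F (Function.update γstar i γ'i) →
        J i γstar ≤ J i (Function.update γstar i γ'i) :=
  multiagent_other_coefficient_potential_minimizer_is_GNE_general Γ F A B hsym c hc J hJ P hP
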